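/- Let A be a commutative ring, R a positive totally ordered aura with tempered growth, and |·| : A → R a multiplicative seminorm. Then the following are equivalent: (1) |·| is non-archimedean, i.e., |a + b| ≤ max(|a|, |b|) for all a, b ∈ A; (2) |2| ≤ 1, where 2 denotes the image of 2 ∈ ℤ in A; (3) |n| ≤ 1 for every n ∈ ℕ (image of n in A). -/

import Mathlib

/-!
In a positive totally ordered semifield every element is nonnegative, and compatibility makes it
an ordered semiring. Tempered growth enters only through its consequence that
`x ^ n ≤ (c * n + 1) * y ^ n` for all `n` forces `x ≤ y`.

If `|2| ≤ 1`, writing `m` in binary gives `|m| ≤ j` whenever `m < 2 ^ j`; hence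
`|n| ^ k = |n ^ k| ≤ n * k + 1` and so `|n| ≤ 1`. If all `|n| ≤ 1`, the binomial expansion gives
`|(a + b) ^ k| ≤ (k + 1) * max (|a|, |b|) ^ k`, which is the ultrametric inequality after taking
`k`-th roots. Finally `|2| = |1 + 1| ≤ max (|1|, |1|) = 1`.
-/

open Finset Polynomial

def TemperedGrowth (R : Type*) [Semiring R] [Preorder R] : Prop :=
  ∀ P : ℕ[X], P ≠ 0 → ∀ x : R, (∀ n : ℕ, x ^ n ≤ ((P.eval n : ℕ) : R)) → x ≤ 1

section

variable {R : Type*} [Semifield R] [LinearOrder R] {A : Type*}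

theorem nonneg_of_mul_le_mul (hmul : ∀ x y z t : R, x ≤ z → y ≤ t → x * y ≤ z * t)
    (hpos : (0 : R) < 1) (x : R) : 0 ≤ x := by
  by_contra! hx
  have h10 : (1 : R) ≤ 0 := by
    rcases le_total x⁻¹ 0 with h | h
    · simpa [mul_inv_cancel₀ hx.ne] using hmul _ _ _ _ hx.le h
    · simpa [mul_inv_cancel₀ hx.ne] using hmul _ _ _ _ hx.le (le_refl x⁻¹)
  exact h10.not_gt hpos

theorem isOrderedRing_of_add_le_add_of_mul_le_mul
    (hadd : ∀ x y z t : R, x ≤ z → y ≤ t → x + y ≤ z + t)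
    (hmul : ∀ x y z t : R, x ≤ z → y ≤ t → x * y ≤ z * t) (hpos : (0 : R) < 1) :
    IsOrderedRing R where
  add_le_add_left _ _ h _ := hadd _ _ _ _ h le_rfl
  zero_le_one := hpos.le
  mul_le_mul_of_nonneg_left _ _ _ _ h := hmul _ _ _ _ le_rfl h
  mul_le_mul_of_nonneg_right _ _ _ _ h := hmul _ _ _ _ h le_rfl

theorem map_two_le_one_of_map_add_le_max [NonAssocSemiring A] (f : A →*₀ R)
    (h : ∀ a b : A, f (a + b) ≤ max (f a) (f b)) : f 2 ≤ 1 := by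
  simpa [one_add_one_eq_two] using h 1 1

variable [IsOrderedRing R]

theorem TemperedGrowth.le_of_pow_le_mul_pow (hR : TemperedGrowth R) (c : ℕ) {x y : R}
    (hy : 0 ≤ y) (h : ∀ n : ℕ, x ^ n ≤ ((c * n + 1 : ℕ) : R) * y ^ n) : x ≤ y := by
  rcases hy.eq_or_lt with rfl | hy
  · simpa using h 1
  have := MulPosMono.toMulPosReflectLT (α := R)
  rw [← div_le_one₀ hy]
  refine hR (C c * X + 1) (fun hP => by simpa using congrArg (eval 0) hP) _ fun n => ?_
  rw [div_pow, div_le_iff₀ ((pow_nonneg hy.le n).lt_of_ne' (pow_ne_zero n hy.ne'))]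
  simpa using h n

theorem map_natCast_le_of_lt_two_pow [NonAssocSemiring A] (f : A →*₀ R)
    (hf : ∀ a b : A, f (a + b) ≤ f a + f b) (hf_nonneg : ∀ a, 0 ≤ f a) (h2 : f 2 ≤ 1) {m j : ℕ}
    (hm : m < 2 ^ j) : f m ≤ j := by
  induction j generalizing m with
  | zero => simp [Nat.lt_one_iff.mp hm]
  | succ j ih =>
    have hdecomp : (m : A) = 2 * ((m / 2 : ℕ) : A) + ((m % 2 : ℕ) : A) := by
      exact_mod_cast congrArg (Nat.cast : ℕ → A) (Nat.div_add_mod m 2).symm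
    have hrem : f ((m % 2 : ℕ) : A) ≤ 1 := by
      rcases Nat.mod_two_eq_zero_or_one m with h | h <;> simp [h]
    have hhalf : f ((m / 2 : ℕ) : A) ≤ j := ih (by rw [pow_succ] at hm; omega)
    calc f m ≤ f 2 * f ((m / 2 : ℕ) : A) + f ((m % 2 : ℕ) : A) := by
          rw [hdecomp, ← map_mul]; exact hf _ _
      _ ≤ 1 * j + 1 := by gcongr; exact hf_nonneg _
      _ = ((j + 1 : ℕ) : R) := by push_cast; ring

theorem map_natCast_le_one_of_map_two_le_one [Semiring A] (f : A →*₀ R)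
    (hf : ∀ a b : A, f (a + b) ≤ f a + f b) (hf_nonneg : ∀ a, 0 ≤ f a) (hR : TemperedGrowth R)
    (h2 : f 2 ≤ 1) (n : ℕ) : f n ≤ 1 := by
  refine hR.le_of_pow_le_mul_pow n zero_le_one fun k => ?_
  rw [one_pow, mul_one, ← map_pow, ← Nat.cast_pow]
  refine map_natCast_le_of_lt_two_pow f hf hf_nonneg h2 ?_
  calc n ^ k ≤ (2 ^ n) ^ k := Nat.pow_le_pow_left Nat.lt_two_pow_self.le k
    _ = 2 ^ (n * k) := (pow_mul 2 n k).symm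
    _ < 2 ^ (n * k + 1) := Nat.pow_lt_pow_right (by norm_num) (by omega)

theorem map_add_pow_le [CommSemiring A] (f : A →*₀ R) (hf : ∀ a b : A, f (a + b) ≤ f a + f b)
    (hf_nonneg : ∀ a, 0 ≤ f a) (h : ∀ n : ℕ, f n ≤ 1) (a b : A) (k : ℕ) :
    f ((a + b) ^ k) ≤ ((k + 1 : ℕ) : R) * max (f a) (f b) ^ k := by
  set M := max (f a) (f b)
  have hterm : ∀ i ∈ range (k + 1), f (a ^ i * b ^ (k - i) * (k.choose i : A)) ≤ M ^ k := by
    intro i hi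
    calc f (a ^ i * b ^ (k - i) * (k.choose i : A))
        = f a ^ i * f b ^ (k - i) * f (k.choose i : A) := by simp only [map_mul, map_pow]
      _ ≤ M ^ i * M ^ (k - i) * 1 := by
          have := hf_nonneg a
          have := hf_nonneg b
          gcongr
          exacts [hf_nonneg _, le_max_left _ _, le_max_right _ _, h _]
      _ = M ^ k := by rw [mul_one, ← pow_add, Nat.add_sub_cancel' (mem_range_succ_iff.mp hi)]
  calc f ((a + b) ^ k) ≤ ∑ i ∈ range (k + 1), f (a ^ i * b ^ (k - i) * (k.choose i : A)) := by
        rw [add_pow]; exact le_sum_of_subadditive f (map_zero f).le hf _ _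
    _ ≤ #(range (k + 1)) • M ^ k := sum_le_card_nsmul _ _ _ hterm
    _ = ((k + 1 : ℕ) : R) * M ^ k := by rw [card_range, nsmul_eq_mul]

theorem map_add_le_max_of_map_natCast_le_one [CommSemiring A] (f : A →*₀ R)
    (hf : ∀ a b : A, f (a + b) ≤ f a + f b) (hf_nonneg : ∀ a, 0 ≤ f a) (hR : TemperedGrowth R)
    (h : ∀ n : ℕ, f n ≤ 1) (a b : A) : f (a + b) ≤ max (f a) (f b) :=
  hR.le_of_pow_le_mul_pow 1 ((hf_nonneg a).trans (le_max_left _ _)) fun k => by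
    simpa [map_pow] using map_add_pow_le f hf hf_nonneg h a b k

end

/-- For a tempered multiplicative seminorm, the following are equivalent:
(1) non-archimedean; (2) `|2| ≤ 1`; (3) `|n| ≤ 1` for all `n : ℕ`. -/
theorem tempered_mult_nonarchimedean_iff {A : Type*} [CommRing A]
    {R : Type*} [Semifield R] [LinearOrder R]
    (hadd : ∀ x y z t : R, x ≤ z → y ≤ t → x + y ≤ z + t)
    (hmul : ∀ x y z t : R, x ≤ z → y ≤ t → x * y ≤ z * t)
    (hpos : (0 : R) < 1)
    (htemp : ∀ P : Polynomial ℕ, P ≠ 0 →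
      ∀ x : R, (∀ n : ℕ, x ^ n ≤ ((P.eval n : ℕ) : R)) → x ≤ 1)
    (f : A → R)
    (hf0 : f 0 = 0) (hf1 : f 1 = 1)
    (hfm : ∀ a b : A, f (a * b) = f a * f b)
    (hfa : ∀ a b : A, f (a + b) ≤ f a + f b) :
    ((∀ a b : A, f (a + b) ≤ max (f a) (f b)) ↔ f ((2 : ℤ) : A) ≤ 1) ∧
      (f ((2 : ℤ) : A) ≤ 1 ↔ ∀ n : ℕ, f ((n : ℕ) : A) ≤ 1) := by
  have := isOrderedRing_of_add_le_add_of_mul_le_mul hadd hmul hpos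
  let g : A →*₀ R := { toFun := f, map_zero' := hf0, map_one' := hf1, map_mul' := hfm }
  have hg_nonneg (a : A) : 0 ≤ g a := nonneg_of_mul_le_mul hmul hpos _
  have hg2 : f ((2 : ℤ) : A) = g 2 := by simp [g]
  have h23 := map_natCast_le_one_of_map_two_le_one g hfa hg_nonneg htemp
  rw [hg2]
  exact ⟨⟨map_two_le_one_of_map_add_le_max g,
      fun h2 => map_add_le_max_of_map_natCast_le_one g hfa hg_nonneg htemp (h23 h2)⟩,
    ⟨h23, fun h => by simpa [g] using h 2⟩⟩
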